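/- arXiv:math/0509054 — 2 statements merged into one kernel-verified Lean document; each statement's English description precedes it below -/
import Mathlib

section
/- Every rational number admits a continued fraction expansion [r_n, ..., r_1] = 1/(r_n - 1/(... - 1/r_1)) of odd length n with integer entries r_i. -/
/-- Inversion on ℚ ∪ {∞} (represented as `Option ℚ`, `none` = ∞),
with the conventions 1/∞ = 0 and 1/0 = ∞. -/
def oinv : Option ℚ → Option ℚ
  | none => some 0
  | some x => if x = 0 then none else some x⁻¹

/-- Subtraction `r - x` on ℚ ∪ {∞}, with the convention r - ∞ = ∞. -/
def osub (r : ℤ) : Option ℚ → Option ℚ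
  | none => none
  | some x => some ((r : ℚ) - x)

/-- The continued fraction [r_n, ..., r_1] = 1/(r_n - 1/(... - 1/r_1)),
valued in ℙ¹(ℚ) = ℚ ∪ {∞}, with cf [] = ∞. -/
def cf : List ℤ → Option ℚ
  | [] => none
  | r :: L => oinv (osub r (cf L))

lemma inv_den_eq {y : ℚ} (hy : 0 < y) : (y⁻¹).den = y.num.natAbs := by
  have hnum : 0 < y.num := Rat.num_pos.mpr hy
  have hco : (y.den : ℤ).natAbs.Coprime y.num.natAbs := by
    simpa using y.reduced.symm
  have hinv : y⁻¹ = (y.den : ℚ) / (y.num : ℚ) := by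
    rw [Rat.inv_def, Rat.divInt_eq_div, Int.cast_natCast]
  rw [hinv]
  have := Rat.den_div_eq_of_coprime hnum hco
  have h2 : ((y.den : ℚ) / (y.num : ℚ)).den = y.num := by exact_mod_cast this
  omega

lemma measure_lt {y : ℚ} (hy : 0 < y) (hy1 : y < 1) :
    ((⌈y⁻¹⌉ : ℚ) - y⁻¹).num.natAbs < y.num.natAbs := by
  set y' : ℚ := (⌈y⁻¹⌉ : ℚ) - y⁻¹ with hy'
  have h0 : 0 ≤ y' := sub_nonneg.2 (Int.le_ceil _)
  have h1 : y' < 1 := by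
    have := Int.ceil_lt_add_one y⁻¹
    simp only [hy']
    linarith
  have hnum0 : 0 ≤ y'.num := Rat.num_nonneg.mpr h0
  have hnumden : y'.num < (y'.den : ℤ) := Rat.num_lt_denom_iff.mpr h1
  have hdvd : y'.den ∣ (y⁻¹).den := by
    have h := Rat.add_den_dvd ((⌈y⁻¹⌉ : ℤ) : ℚ) (-y⁻¹)
    have hne : ((⌈y⁻¹⌉ : ℤ) : ℚ) + -y⁻¹ = y' := by rw [hy']; ring
    rw [hne] at h
    simpa using h
  have hle : y'.den ≤ (y⁻¹).den := Nat.le_of_dvd (y⁻¹).pos hdvd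
  have := inv_den_eq hy
  omega

lemma cf_step {y : ℚ} (hy : y ≠ 0) {L : List ℤ}
    (hL : cf L = some (↑⌈y⁻¹⌉ - y⁻¹)) : cf (⌈y⁻¹⌉ :: L) = some y := by
  have hinv : (⌈y⁻¹⌉ : ℚ) - ((⌈y⁻¹⌉ : ℚ) - y⁻¹) = y⁻¹ := by ring
  have hne : y⁻¹ ≠ 0 := inv_ne_zero hy
  simp [cf, hL, osub, oinv, hinv, hne]

lemma both_parities : ∀ n : ℕ, ∀ y : ℚ, y.num.natAbs = n → 0 ≤ y → y < 1 →
    (∃ L : List ℤ, Odd L.length ∧ cf L = some y) ∧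
    (∃ L : List ℤ, Even L.length ∧ cf L = some y) := by
  intro n
  induction n using Nat.strong_induction_on with
  | _ n ih =>
    intro y hn h0 h1
    rcases eq_or_lt_of_le h0 with h | hpos
    · constructor
      · exact ⟨[1], ⟨0, rfl⟩, by simp [cf, oinv, osub, ← h]⟩
      · refine ⟨[0, 1, 1, 1], ⟨2, rfl⟩, ?_⟩
        rw [← h]
        norm_num [cf, oinv, osub]
    · have hy0 : y ≠ 0 := ne_of_gt hpos
      set y' : ℚ := (⌈y⁻¹⌉ : ℚ) - y⁻¹ with hy'
      have h0' : 0 ≤ y' := sub_nonneg.2 (Int.le_ceil _)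
      have h1' : y' < 1 := by
        have := Int.ceil_lt_add_one y⁻¹
        simp only [hy']; linarith
      have hm : y'.num.natAbs < n := hn ▸ measure_lt hpos h1
      obtain ⟨⟨Lo, hLo, hcfo⟩, ⟨Le, hLe, hcfe⟩⟩ := ih _ hm y' rfl h0' h1'
      constructor
      · exact ⟨⌈y⁻¹⌉ :: Le, by simpa using hLe.add_one, cf_step hy0 hcfe⟩
      · exact ⟨⌈y⁻¹⌉ :: Lo, by simpa using hLo.add_one, cf_step hy0 hcfo⟩

theorem exists_odd_length_cf (x : ℚ) :
    ∃ L : List ℤ, Odd L.length ∧ cf L = some x := by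
  rcases eq_or_ne x 0 with rfl | hx
  · exact ⟨[1], ⟨0, rfl⟩, by simp [cf, oinv, osub]⟩
  · set y' : ℚ := (⌈x⁻¹⌉ : ℚ) - x⁻¹ with hy'
    have h0' : 0 ≤ y' := sub_nonneg.2 (Int.le_ceil _)
    have h1' : y' < 1 := by
      have := Int.ceil_lt_add_one x⁻¹
      simp only [hy']; linarith
    obtain ⟨-, ⟨Le, hLe, hcfe⟩⟩ := both_parities _ y' rfl h0' h1'
    exact ⟨⌈x⁻¹⌉ :: Le, by simpa using hLe.add_one, cf_step hx hcfe⟩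
end

section
/- For any rational p/q in lowest terms with q ≠ 0 and any integers s, t: if (p', q') = (p − s·q, t·(p − s·q) + q), then gcd(p', q') = 1 and the map p/q ↦ p'/q' on ℙ¹(ℚ) coincides with the Möbius transformation x ↦ 1/(t − 1/(s − x)). -/
/-- The slope p/q ∈ ℙ¹(ℚ) = ℚ ∪ {∞} (as `Option ℚ`, `none` = ∞) of a pair (p, q). -/
def slopePQ (p q : ℤ) : Option ℚ :=
  if q = 0 then none else some ((p : ℚ) / (q : ℚ))

/-- The Möbius transformation x ↦ 1/(t - 1/(s - x)) on ℙ¹(ℚ). -/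
def mob (s t : ℤ) (x : Option ℚ) : Option ℚ :=
  oinv (osub t (oinv (osub s x)))

/-- The homological effect of β^t ∘ α^s on a slope p/q in lowest terms:
(p', q') = (p - s q, t(p - s q) + q) is again primitive and its slope is
the Möbius transform 1/(t - 1/(s - p/q)) of p/q. -/
theorem slope_twist_mobius (p q s t : ℤ) (hq : q ≠ 0) (h : Int.gcd p q = 1) :
    Int.gcd (p - s * q) (t * (p - s * q) + q) = 1 ∧
    slopePQ (p - s * q) (t * (p - s * q) + q) = mob s t (slopePQ p q) := by
  have hqQ : (q : ℚ) ≠ 0 := Int.cast_ne_zero.mpr hq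
  constructor
  · have hc : IsCoprime p q := Int.isCoprime_iff_gcd_eq_one.mpr h
    have hc1 : IsCoprime (p - s * q) q := by
      have h2 := hc.add_mul_left_left (-s)
      have e : p - s * q = p + q * -s := by ring
      rw [e]; exact h2
    have hc2 : IsCoprime (p - s * q) (t * (p - s * q) + q) := by
      have h2 := (hc1.symm.add_mul_left_left t).symm
      have e : t * (p - s * q) + q = q + (p - s * q) * t := by ring
      rw [e]; exact h2
    exact Int.isCoprime_iff_gcd_eq_one.mp hc2
  · simp only [slopePQ, mob, osub, oinv, if_neg hq]
    by_cases h0 : p - s * q = 0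
    · have : (s : ℚ) - (p : ℚ) / q = 0 := by
        have : (p : ℚ) = s * q := by exact_mod_cast sub_eq_zero.mp h0
        field_simp [this]
        rw [this]; ring
      rw [if_pos this]
      simp [osub, oinv, h0, hq]
    · have h0Q : (s : ℚ) - (p : ℚ) / q ≠ 0 := by
        intro hc
        apply h0
        have : (p : ℚ) = s * q := by field_simp at hc; linarith
        exact_mod_cast sub_eq_zero.mpr (by exact_mod_cast this)
      rw [if_neg h0Q]
      simp only [osub, oinv]
      have hd : ((p - s * q : ℤ) : ℚ) ≠ 0 := Int.cast_ne_zero.mpr h0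
      have key : (t : ℚ) - ((s : ℚ) - (p : ℚ) / q)⁻¹
          = ((t * (p - s * q) + q : ℤ) : ℚ) / ((p - s * q : ℤ) : ℚ) := by
        have hne : (s : ℚ) * q - p ≠ 0 := by
          intro hc; apply h0
          have : (p : ℚ) = s * q := by linarith
          exact_mod_cast sub_eq_zero.mpr (by exact_mod_cast this)
        have hd' : (p : ℚ) - s * q ≠ 0 := by push_cast at hd ⊢; exact hd
        push_cast
        rw [eq_div_iff hd']
        field_simp [hne]
        ring
      by_cases h1 : t * (p - s * q) + q = 0
      · rw [if_pos h1, if_pos (by rw [key, h1]; simp)]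
      · have h1Q : ((t * (p - s * q) + q : ℤ) : ℚ) ≠ 0 := Int.cast_ne_zero.mpr h1
        rw [if_neg h1, if_neg (by rw [key]; exact div_ne_zero h1Q hd)]
        rw [key]
        push_cast
        field_simp
end
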